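/- arXiv:1704.05405 — 4 statements merged into one kernel-verified Lean document; each statement's English description precedes it below -/
import Mathlib

section
/- For any unit-norm vector w ∈ ℂ^M, the beampattern g(θ) = |w^H α(θ)|² with steering vector α(θ) = (1, e^{-i2πD sinθ}, ..., e^{-i2πD sinθ (M-1)}) satisfies ∫_{sin Θmin}^{sin Θmax} g(arcsin x) dx ≤ 1/D, for any -1 ≤ sin Θmin < sin Θmax ≤ 1 with 2πD ≤ π/ max(|sin Θmin|,|sin Θmax|) ensuring the frequency variable Ω = 2πD x stays in [-π, π]. -/
/-!
The beampattern is `‖∑ₘ conj (w m) eₘ(x)‖²` with `eₘ(x) = exp (2πi (-m) x / T)` and `T = 1/D`.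
Exponentials with distinct integer frequencies are orthogonal over any period, so the integral
over a period is `T ∑ₘ ‖w m‖² = 1/D`. The frequency condition puts
`[s₁, s₂]` inside the period `[-1/(2D), 1/(2D)]`, and the integrand is nonnegative.
-/

open Complex Real MeasureTheory

open scoped ComplexConjugate

section Parseval

variable {ι : Type*} [Fintype ι] {T : ℝ}

theorem integral_exp_two_pi_I_int_mul_div (hT : T ≠ 0) (t : ℝ) (k : ℤ) :
    ∫ x in t..t + T, exp (2 * π * I * k * x / T) = if k = 0 then (T : ℂ) else 0 := by
  split_ifs with hk
  · simp [hk]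
  · have hc : 2 * π * I * k / T ≠ 0 := by
      have : (T : ℂ) ≠ 0 := ofReal_ne_zero.mpr hT
      simp [hk, this, pi_ne_zero, I_ne_zero]
    have hperiod : exp (2 * π * I * k / T * ↑(t + T)) = exp (2 * π * I * k / T * t) := by
      rw [ofReal_add, mul_add, Complex.exp_add, div_mul_cancel₀ _ (ofReal_ne_zero.mpr hT),
        show 2 * π * I * k = k * (2 * π * I) by ring, exp_int_mul_two_pi_mul_I, mul_one]
    have hfun : (fun x : ℝ => exp (2 * π * I * k * x / T)) =
        fun x : ℝ => exp (2 * π * I * k / T * x) := by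
      ext x; rw [mul_div_right_comm]
    rw [hfun, integral_exp_mul_complex hc, hperiod, sub_self, zero_div]

theorem conj_sum_exp_mul_sum_exp (a : ι → ℂ) (k : ι → ℤ) (x : ℝ) :
    conj (∑ i, a i * exp (2 * π * I * k i * x / T)) * ∑ i, a i * exp (2 * π * I * k i * x / T) =
      ∑ i, ∑ j, conj (a i) * a j * exp (2 * π * I * ↑(k j - k i) * x / T) := by
  rw [map_sum, Finset.sum_mul_sum]
  refine Finset.sum_congr rfl fun i _ => Finset.sum_congr rfl fun j _ => ?_
  rw [map_mul, ← exp_conj, mul_mul_mul_comm, ← Complex.exp_add]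
  congr 2
  simp only [map_mul, map_div₀, map_ofNat, conj_ofReal, conj_I, map_intCast, Int.cast_sub]
  ring

theorem integral_norm_sq_sum_exp_eq (hT : T ≠ 0) (t : ℝ) {k : ι → ℤ} (hk : Function.Injective k)
    (a : ι → ℂ) :
    ∫ x in t..t + T, ‖∑ i, a i * exp (2 * π * I * k i * x / T)‖ ^ 2 = T * ∑ i, ‖a i‖ ^ 2 := by
  have hterm (i j : ι) :
      ∫ x in t..t + T, conj (a i) * a j * exp (2 * π * I * ↑(k j - k i) * x / T) =
        conj (a i) * a j * if k j - k i = 0 then (T : ℂ) else 0 := by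
    rw [intervalIntegral.integral_const_mul, integral_exp_two_pi_I_int_mul_div hT]
  apply ofReal_injective
  rw [← intervalIntegral.integral_ofReal]
  simp_rw [ofReal_pow, ← conj_mul', conj_sum_exp_mul_sum_exp]
  rw [intervalIntegral.integral_finsetSum fun i _ => Continuous.intervalIntegrable (by fun_prop) _ _]
  rw [ofReal_mul, ofReal_sum, Finset.mul_sum]
  refine Finset.sum_congr rfl fun i _ => ?_
  rw [intervalIntegral.integral_finsetSum fun j _ => Continuous.intervalIntegrable (by fun_prop) _ _,
    Finset.sum_eq_single_of_mem i (Finset.mem_univ i) fun j _ hji => by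
      rw [hterm, if_neg (sub_ne_zero.mpr (hk.ne hji)), mul_zero],
    hterm, sub_self, if_pos rfl, conj_mul', ofReal_pow, mul_comm]

end Parseval

theorem beampattern_integral_le_general (M : ℕ) (D s₁ s₂ : ℝ) (hD : 0 < D)
    (h₁₂ : s₁ < s₂)
    (hfreq : 2 * π * D * max |s₁| |s₂| ≤ π)
    (w : Fin M → ℂ) (hw : ∑ m, ‖w m‖ ^ 2 = 1) :
    (∫ x in s₁..s₂,
        ‖∑ m : Fin M, (starRingEnd ℂ) (w m) *
          Complex.exp (-Complex.I * (2 * π * D * x) * m)‖ ^ 2) ≤ 1 / D := by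
  set c := 1 / (2 * D)
  have hmax : max |s₁| |s₂| ≤ c := by
    rw [le_div_iff₀ (by positivity)]
    nlinarith [pi_pos]
  have hs₁ : -c ≤ s₁ := neg_le_of_abs_le ((le_max_left _ _).trans hmax)
  have hs₂ : s₂ ≤ -c + 1 / D := by
    have hperiod : 1 / D = 2 * c := by simp only [c]; field_simp
    linarith [le_of_abs_le ((le_max_right _ _).trans hmax)]
  have hfourier : ∀ (x : ℝ) (m : Fin M), -I * (2 * π * D * x) * m =
      2 * π * I * (↑(-(m : ℤ)) : ℂ) * x / ((1 / D : ℝ) : ℂ) := by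
    intro x m
    have : (D : ℂ) ≠ 0 := ofReal_ne_zero.mpr hD.ne'
    push_cast
    field_simp
  simp_rw [hfourier]
  calc _ ≤ ∫ x in -c..-c + 1 / D, ‖∑ m : Fin M, conj (w m) *
          exp (2 * π * I * (↑(-(m : ℤ)) : ℂ) * x / ((1 / D : ℝ) : ℂ))‖ ^ 2 :=
        intervalIntegral.integral_mono_interval hs₁ h₁₂.le hs₂
          (Filter.Eventually.of_forall fun _ => sq_nonneg _)
          (Continuous.intervalIntegrable (by fun_prop) _ _)
    _ = 1 / D := by
      rw [integral_norm_sq_sum_exp_eq (one_div_ne_zero hD.ne') _ (k := fun m : Fin M => -(m : ℤ))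
        (neg_injective.comp (Nat.cast_injective.comp Fin.val_injective))]
      simp only [Complex.norm_conj, hw, mul_one]

/-- For any unit-norm beamformer `w ∈ ℂ^M`, the integral of the beampattern
`g(arcsin x) = |∑_m conj (w m) e^{-i 2πD x m}|²` over the spatial frequency interval
`[sin Θmin, sin Θmax]` is at most `1/D`, provided the frequency variable
`Ω = 2πD x` stays within `[-π, π]`. -/
theorem beampattern_integral_le (M : ℕ) (D s₁ s₂ : ℝ) (hD : 0 < D)
    (h₁ : -1 ≤ s₁) (h₁₂ : s₁ < s₂) (h₂ : s₂ ≤ 1)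
    (hfreq : 2 * π * D * max |s₁| |s₂| ≤ π)
    (w : Fin M → ℂ) (hw : ∑ m, ‖w m‖ ^ 2 = 1) :
    (∫ x in s₁..s₂,
        ‖∑ m : Fin M, (starRingEnd ℂ) (w m) *
          Complex.exp (-Complex.I * (2 * π * D * x) * m)‖ ^ 2) ≤ 1 / D :=
  beampattern_integral_le_general M D s₁ s₂ hD h₁₂ hfreq w hw
end

section
/- If a unit-norm beamformer w ∈ ℂ^M has constant beampattern g(arcsin x) = c for all x in the spatial frequency interval [sin Θmin, sin Θmax], then c ≤ 1/(D(sin Θmax − sin Θmin)). -/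
/-!
Parseval over one period: the beampattern is `|p|²` for the trigonometric polynomial
`p(x) = ∑ₘ w̄ₘ e^{-2πiDmx}`, whose frequencies are integer multiples of `D`, so its integral over
any window of length `1/D` is `‖w‖²/D = 1/D`. The frequency condition puts `[s₁, s₂]` inside such a
window, so `c (s₂ - s₁) = ∫_{s₁}^{s₂} |p|² ≤ 1/D`.
-/

open Complex Real MeasureTheory

open scoped ComplexConjugate

lemma integral_exp_two_pi_int_mul_period {D : ℝ} (hD : D ≠ 0) (a : ℝ) (k : ℤ) :
    ∫ x in a..a + 1 / D, exp (2 * π * I * D * k * x) =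
      if k = 0 then ((1 / D : ℝ) : ℂ) else 0 := by
  split_ifs with hk
  · simp [hk]
  have hc : (2 * π * I * D * k : ℂ) ≠ 0 := by simp [pi_ne_zero, I_ne_zero, hD, hk]
  have hperiodic : exp (2 * π * I * D * k * ↑(a + 1 / D)) = exp (2 * π * I * D * k * a) := by
    have hD' : (D : ℂ) ≠ 0 := ofReal_ne_zero.mpr hD
    rw [← mul_one (Complex.exp (_ * a)), ← exp_int_mul_two_pi_mul_I k, ← Complex.exp_add]
    congr 1
    push_cast
    field_simp
  rw [integral_exp_mul_complex hc, hperiodic, sub_self, zero_div]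

lemma integral_norm_sq_sum_exp_period {ι : Type*} [Fintype ι] (b : ι → ℂ) {k : ι → ℤ}
    (hk : Function.Injective k) {D : ℝ} (hD : D ≠ 0) (a : ℝ) :
    ∫ x in a..a + 1 / D, ‖∑ i, b i * exp (2 * π * I * D * k i * x)‖ ^ 2 =
      1 / D * ∑ i, ‖b i‖ ^ 2 := by
  classical
  have hexpand (x : ℝ) : ((‖∑ i, b i * exp (2 * π * I * D * k i * x)‖ ^ 2 : ℝ) : ℂ) =
      ∑ i, ∑ j, conj (b i) * b j * exp (2 * π * I * D * ((k j - k i : ℤ) : ℂ) * x) := by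
    rw [ofReal_pow, ← conj_mul', map_sum, Finset.sum_mul_sum]
    refine Finset.sum_congr rfl fun i _ => Finset.sum_congr rfl fun j _ => ?_
    rw [map_mul, ← exp_conj, mul_mul_mul_comm, ← Complex.exp_add]
    congr 2
    simp only [map_mul, map_ofNat, conj_ofReal, conj_I, map_intCast]
    push_cast
    ring
  have hterm (i j : ι) : Continuous
      fun x : ℝ => conj (b i) * b j * exp (2 * π * I * D * ((k j - k i : ℤ) : ℂ) * x) := by
    fun_prop
  have hfreq (i j : ι) : k j - k i = 0 ↔ j = i := sub_eq_zero.trans hk.eq_iff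
  apply ofReal_injective
  rw [← intervalIntegral.integral_ofReal]
  simp_rw [hexpand]
  rw [intervalIntegral.integral_finsetSum fun i _ =>
    (continuous_finsetSum _ fun j _ => hterm i j).intervalIntegrable _ _]
  simp_rw [intervalIntegral.integral_finsetSum fun j _ => (hterm _ j).intervalIntegrable _ _,
    intervalIntegral.integral_const_mul, integral_exp_two_pi_int_mul_period hD]
  simp only [hfreq, mul_ite, mul_zero, Finset.sum_ite_eq', Finset.mem_univ, if_true]
  rw [ofReal_mul, ofReal_sum, Finset.mul_sum]
  refine Finset.sum_congr rfl fun i _ => ?_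
  rw [conj_mul', ofReal_pow, mul_comm]

lemma integral_beampattern_period {M : ℕ} (w : Fin M → ℂ) {D : ℝ} (hD : D ≠ 0) (a : ℝ) :
    ∫ x in a..a + 1 / D, ‖∑ m : Fin M, conj (w m) * exp (-I * (2 * π * D * x) * m)‖ ^ 2 =
      1 / D * ∑ m, ‖w m‖ ^ 2 := by
  have hk : Function.Injective fun m : Fin M => -((m : ℕ) : ℤ) :=
    neg_injective.comp (Nat.cast_injective.comp Fin.val_injective)
  convert integral_norm_sq_sum_exp_period (conj ∘ w) hk hD a using 1
  · congr! 6 with x m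
    congr 1
    push_cast
    ring
  · simp

lemma le_one_div_two_mul_of_two_pi_mul_le_pi {D t : ℝ} (hD : 0 < D) (h : 2 * π * D * t ≤ π) :
    t ≤ 1 / (2 * D) := by
  rw [le_div_iff₀ (by positivity)]
  nlinarith [pi_pos]

lemma mul_sub_le_integral_of_eqOn_Icc {g : ℝ → ℝ} {a b s₁ s₂ c : ℝ} (hg : 0 ≤ g)
    (hgi : IntervalIntegrable g volume a b) (ha : a ≤ s₁) (h₁₂ : s₁ ≤ s₂) (hb : s₂ ≤ b)
    (hc : Set.EqOn g (fun _ => c) (Set.Icc s₁ s₂)) :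
    c * (s₂ - s₁) ≤ ∫ x in a..b, g x := by
  have hflat : ∫ x in s₁..s₂, g x = c * (s₂ - s₁) := by
    rw [intervalIntegral.integral_congr (Set.uIcc_of_le h₁₂ ▸ hc),
      intervalIntegral.integral_const, smul_eq_mul, mul_comm]
  rw [← hflat]
  exact intervalIntegral.integral_mono_interval ha h₁₂ hb (Filter.Eventually.of_forall hg) hgi

theorem flat_beampattern_level_le_general (M : ℕ) (D s₁ s₂ : ℝ) (hD : 0 < D)
    (h₁₂ : s₁ < s₂)
    (hfreq : 2 * π * D * max |s₁| |s₂| ≤ π)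
    (w : Fin M → ℂ) (hw : ∑ m, ‖w m‖ ^ 2 = 1)
    (c : ℝ)
    (hconst : ∀ x ∈ Set.Icc s₁ s₂,
      ‖∑ m : Fin M, (starRingEnd ℂ) (w m) *
        Complex.exp (-Complex.I * (2 * π * D * x) * m)‖ ^ 2 = c) :
    c ≤ 1 / (D * (s₂ - s₁)) := by
  obtain ⟨hs₁, hs₂⟩ := max_le_iff.mp (le_one_div_two_mul_of_two_pi_mul_le_pi hD hfreq)
  have hhalf : -(1 / (2 * D)) + 1 / D = 1 / (2 * D) := by field_simp; ring
  have hle : c * (s₂ - s₁) ≤ 1 / D :=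
    calc c * (s₂ - s₁)
        ≤ ∫ x in -(1 / (2 * D))..-(1 / (2 * D)) + 1 / D,
            ‖∑ m : Fin M, conj (w m) * exp (-I * (2 * π * D * x) * m)‖ ^ 2 :=
          mul_sub_le_integral_of_eqOn_Icc (fun x => by positivity)
            ((by fun_prop : Continuous _).intervalIntegrable _ _) (neg_le_of_abs_le hs₁) h₁₂.le
            ((le_of_abs_le hs₂).trans hhalf.ge) hconst
      _ = 1 / D := by rw [integral_beampattern_period w hD.ne', hw, mul_one]
  rwa [← div_div, le_div_iff₀ (sub_pos.mpr h₁₂)]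

/-- If a unit-norm beamformer has constant beampattern `c` on the spatial frequency
interval `[sin Θmin, sin Θmax]`, then `c ≤ 1/(D (sin Θmax − sin Θmin))`. -/
theorem flat_beampattern_level_le (M : ℕ) (D s₁ s₂ : ℝ) (hD : 0 < D)
    (h₁ : -1 ≤ s₁) (h₁₂ : s₁ < s₂) (h₂ : s₂ ≤ 1)
    (hfreq : 2 * π * D * max |s₁| |s₂| ≤ π)
    (w : Fin M → ℂ) (hw : ∑ m, ‖w m‖ ^ 2 = 1)
    (c : ℝ)
    (hconst : ∀ x ∈ Set.Icc s₁ s₂,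
      ‖∑ m : Fin M, (starRingEnd ℂ) (w m) *
        Complex.exp (-Complex.I * (2 * π * D * x) * m)‖ ^ 2 = c) :
    c ≤ 1 / (D * (s₂ - s₁)) :=
  flat_beampattern_level_le_general M D s₁ s₂ hD h₁₂ hfreq w hw c hconst
end

section
/- There does not exist a unit-norm vector w ∈ ℂ^M (M ≥ 2) whose beampattern g(arcsin x) = |Σ_{m=0}^{M-1} conj(w_m) e^{-i2πD x m}|² equals the ideal beampattern: g = 1/(D(sin Θmax − sin Θmin)) on [sin Θmin, sin Θmax] and g = 0 outside, for a proper subinterval [sin Θmin, sin Θmax] ⊊ [-1/(2D), 1/(2D)]. -/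
open Complex Real MeasureTheory

/-- FIR filter impossibility: there is no unit-norm beamformer `w ∈ ℂ^M` (`M ≥ 2`) whose
beampattern equals the ideal brick-wall beampattern, namely
`1/(D(sin Θmax − sin Θmin))` on the sector `[sin Θmin, sin Θmax]` and `0` on the rest of
the fundamental interval `[-1/(2D), 1/(2D)]`, when the sector is a proper subinterval. -/
theorem no_ideal_beampattern (M : ℕ) (hM : 2 ≤ M) (D s₁ s₂ : ℝ) (hD : 0 < D)
    (h₁ : -(1 / (2 * D)) ≤ s₁) (h₁₂ : s₁ < s₂) (h₂ : s₂ ≤ 1 / (2 * D))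
    (hproper : -(1 / (2 * D)) < s₁ ∨ s₂ < 1 / (2 * D)) :
    ¬ ∃ w : Fin M → ℂ, (∑ m, ‖w m‖ ^ 2 = 1) ∧
      (∀ x ∈ Set.Icc s₁ s₂,
        ‖∑ m : Fin M, (starRingEnd ℂ) (w m) *
          Complex.exp (-Complex.I * (2 * π * D * x) * m)‖ ^ 2
          = 1 / (D * (s₂ - s₁))) ∧
      (∀ x ∈ Set.Icc (-(1 / (2 * D))) (1 / (2 * D)) \ Set.Icc s₁ s₂,
        ‖∑ m : Fin M, (starRingEnd ℂ) (w m) *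
          Complex.exp (-Complex.I * (2 * π * D * x) * m)‖ ^ 2 = 0) := by
  rintro ⟨w, -, hsec, hout⟩
  set F : ℂ → ℂ := fun z => ∑ m : Fin M, (starRingEnd ℂ) (w m) *
      Complex.exp (-Complex.I * (2 * π * D * z) * m) with hFdef
  have hFdiff : Differentiable ℂ F := by
    apply Differentiable.fun_sum
    intro m _
    apply Differentiable.const_mul
    apply Differentiable.cexp
    fun_prop
  have hFa : AnalyticOnNhd ℂ F Set.univ :=
    (hFdiff.differentiableOn).analyticOnNhd isOpen_univ
  set g : ℝ → ℂ := fun x : ℝ => F (x : ℂ) with hgdef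
  have hga : AnalyticOnNhd ℝ g Set.univ := by
    have h1 : AnalyticOnNhd ℝ F Set.univ := hFa.restrictScalars
    have h2 : AnalyticOnNhd ℝ (fun x : ℝ => (x : ℂ)) Set.univ :=
      Complex.ofRealCLM.analyticOnNhd Set.univ
    exact h1.comp h2 (Set.mapsTo_univ _ _)
  -- an open interval on which the beampattern vanishes
  obtain ⟨a, b, hab, hsub⟩ : ∃ a b : ℝ, a < b ∧
      Set.Ioo a b ⊆ Set.Icc (-(1 / (2 * D))) (1 / (2 * D)) \ Set.Icc s₁ s₂ := by
    rcases hproper with h | h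
    · exact ⟨-(1 / (2 * D)), s₁, h, fun x hx =>
        ⟨⟨hx.1.le, hx.2.le.trans (h₁₂.le.trans h₂)⟩, fun hx' => absurd hx'.1 (not_le.2 hx.2)⟩⟩
    · exact ⟨s₂, 1 / (2 * D), h, fun x hx =>
        ⟨⟨le_trans (le_trans h₁ h₁₂.le) hx.1.le, hx.2.le⟩,
          fun hx' => absurd hx'.2 (not_le.2 hx.1)⟩⟩
  have hzero : ∀ x ∈ Set.Ioo a b, g x = 0 := by
    intro x hx
    have := hout x (hsub hx)
    have hn : ‖g x‖ = 0 := by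
      have := sq_eq_zero_iff.mp this
      simpa [hgdef, hFdef] using this
    exact norm_eq_zero.mp hn
  have hmid : (a + b) / 2 ∈ Set.Ioo a b := ⟨by linarith, by linarith⟩
  have hev : g =ᶠ[nhds ((a + b) / 2)] 0 :=
    Filter.eventuallyEq_of_mem (Ioo_mem_nhds hmid.1 hmid.2) hzero
  have hEq : Set.EqOn g 0 Set.univ :=
    hga.eqOn_zero_of_preconnected_of_eventuallyEq_zero isPreconnected_univ
      (Set.mem_univ _) hev
  have hs1 : g s₁ = 0 := hEq (Set.mem_univ s₁)
  have hval := hsec s₁ ⟨le_rfl, h₁₂.le⟩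
  have : (0 : ℝ) = 1 / (D * (s₂ - s₁)) := by
    rw [← hval]
    simp [hgdef, hFdef] at hs1 ⊢
    simp [hs1]
  have hpos : 0 < 1 / (D * (s₂ - s₁)) := one_div_pos.mpr (mul_pos hD (sub_pos.mpr h₁₂))
  linarith
end

section
/- Let w ∈ ℂ^M be nonzero and set N_RF ≥ 2. Define b = max_i |w_i| / N_RF and w_BB = (b, b, ..., b) ∈ ℂ^{N_RF}. Then for every index i, the lengths |w_i|, b, b, ..., b (N_RF copies of b) satisfy the polygon inequality: the largest among them is at most the sum of the others. Consequently there exist unimodular complex numbers u_{i,1},...,u_{i,N_RF} (|u_{i,j}| = 1) with w_i = b Σ_{j=1}^{N_RF} u_{i,j}. -/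
open Complex

/-
Writing `z = ‖z‖ e^{iα}`, the two unit vectors `e^{i(α ± θ)}` with `cos θ = ‖z‖ / 2` sum to `z`,
so every `z` with `‖z‖ ≤ 2` is a sum of two unimodular numbers. Subtracting the unit vector
`e^{iα}` changes the modulus to `|‖z‖ - 1|`, which is at most `n - 1` when `‖z‖ ≤ n` and `n ≥ 2`;
by induction every `z` with `‖z‖ ≤ n` is a sum of `n` unimodular numbers. Scaling by
`b = max_i ‖w_i‖ / N` then decomposes each `w_i`, since `‖w_i‖ ≤ N b`.
-/

namespace Complex

theorem exists_norm_one_add_norm_one_eq_of_norm_le_two {z : ℂ} (hz : ‖z‖ ≤ 2) :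
    ∃ u v : ℂ, ‖u‖ = 1 ∧ ‖v‖ = 1 ∧ z = u + v := by
  set θ := Real.arccos (‖z‖ / 2)
  have hcos : Real.cos θ = ‖z‖ / 2 :=
    Real.cos_arccos (by linarith [norm_nonneg z]) (by linarith)
  refine ⟨exp ((arg z + θ : ℝ) * I), exp ((arg z - θ : ℝ) * I),
    norm_exp_ofReal_mul_I _, norm_exp_ofReal_mul_I _, ?_⟩
  calc z = ‖z‖ * exp (arg z * I) := (norm_mul_exp_arg_mul_I z).symm
    _ = exp (arg z * I) * (2 * Real.cos θ) := by rw [hcos]; push_cast; ring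
    _ = exp ((arg z + θ : ℝ) * I) + exp ((arg z - θ : ℝ) * I) := by
      rw [ofReal_cos, two_cos]
      push_cast
      rw [add_mul, sub_mul, exp_add, sub_eq_add_neg, exp_add, ← neg_mul]
      ring

theorem exists_norm_one_norm_sub_eq (z : ℂ) : ∃ u : ℂ, ‖u‖ = 1 ∧ ‖z - u‖ = |‖z‖ - 1| := by
  refine ⟨exp (arg z * I), norm_exp_ofReal_mul_I _, ?_⟩
  calc ‖z - exp (arg z * I)‖ = ‖((‖z‖ - 1 : ℝ) : ℂ) * exp (arg z * I)‖ := by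
        nth_rw 1 [← norm_mul_exp_arg_mul_I z]
        push_cast
        ring_nf
    _ = |‖z‖ - 1| := by rw [norm_mul, norm_exp_ofReal_mul_I, mul_one, norm_real, Real.norm_eq_abs]

theorem exists_sum_norm_one_eq_of_norm_le {n : ℕ} (hn : 2 ≤ n) {z : ℂ} (hz : ‖z‖ ≤ n) :
    ∃ u : Fin n → ℂ, (∀ j, ‖u j‖ = 1) ∧ z = ∑ j, u j := by
  induction n, hn using Nat.le_induction generalizing z with
  | base =>
    obtain ⟨u, v, hu, hv, rfl⟩ := exists_norm_one_add_norm_one_eq_of_norm_le_two (by simpa using hz)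
    exact ⟨![u, v], by simp [Fin.forall_fin_two, hu, hv], by simp⟩
  | succ n hn ih =>
    obtain ⟨u₀, hu₀, hsub⟩ := exists_norm_one_norm_sub_eq z
    have hn' : (2 : ℝ) ≤ n := by exact_mod_cast hn
    push_cast at hz
    obtain ⟨u, hu, hsum⟩ := ih (z := z - u₀) <| by
      rw [hsub, abs_le]
      constructor <;> linarith [norm_nonneg z]
    refine ⟨Fin.cons u₀ u, Fin.cases hu₀ hu, ?_⟩
    rw [Fin.sum_cons, ← hsum, add_sub_cancel]

theorem exists_eq_mul_sum_norm_one {n : ℕ} (hn : 2 ≤ n) {b : ℝ} (hb : 0 ≤ b) {z : ℂ}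
    (hz : ‖z‖ ≤ n * b) : ∃ u : Fin n → ℂ, (∀ j, ‖u j‖ = 1) ∧ z = b * ∑ j, u j := by
  rcases hb.eq_or_lt with rfl | hb
  · refine ⟨fun _ ↦ 1, fun _ ↦ norm_one, ?_⟩
    simpa using hz
  · have hb' : (b : ℂ) ≠ 0 := ofReal_ne_zero.mpr hb.ne'
    obtain ⟨u, hu, hsum⟩ := exists_sum_norm_one_eq_of_norm_le hn (z := z / b) <| by
      rwa [norm_div, norm_real, Real.norm_of_nonneg hb.le, div_le_iff₀ hb]
    exact ⟨u, hu, by rw [← hsum, mul_div_cancel₀ _ hb']⟩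

end Complex

theorem hybrid_decomposition_general (M N : ℕ) (hN : 2 ≤ N) (w : Fin M → ℂ)
    (b : ℝ) (hb : b = (⨆ i, ‖w i‖) / N) :
    ∀ i : Fin M,
      (‖w i‖ ≤ N * b ∧ b ≤ (N - 1) * b + ‖w i‖) ∧
      ∃ u : Fin N → ℂ, (∀ j, ‖u j‖ = 1) ∧ w i = (b : ℂ) * ∑ j, u j := by
  have hb₀ : 0 ≤ b := hb ▸ div_nonneg (Real.iSup_nonneg fun i ↦ norm_nonneg (w i)) N.cast_nonneg
  have hN' : (2 : ℝ) ≤ N := by exact_mod_cast hN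
  intro i
  have hwi : ‖w i‖ ≤ N * b := by
    rw [hb, mul_div_cancel₀ _ (by positivity)]
    exact le_ciSup (Set.finite_range fun i ↦ ‖w i‖).bddAbove i
  refine ⟨⟨hwi, ?_⟩, exists_eq_mul_sum_norm_one hN hb₀ hwi⟩
  nlinarith [norm_nonneg (w i)]

/-- Hybrid beamforming decomposition (Lemma 2): with `b = max_i |w_i| / N_RF` and
`w_BB = (b,...,b)`, for every `i` the lengths `|w_i|, b, ..., b` (`N_RF` copies of `b`)
satisfy the polygon inequality (the largest is at most the sum of the others), and
consequently `w_i = b ∑_j u_{i,j}` for some unimodular `u_{i,j}`. -/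
theorem hybrid_decomposition (M N : ℕ) (hN : 2 ≤ N) (w : Fin M → ℂ) (hw : w ≠ 0)
    (b : ℝ) (hb : b = (⨆ i, ‖w i‖) / N) :
    ∀ i : Fin M,
      (‖w i‖ ≤ N * b ∧ b ≤ (N - 1) * b + ‖w i‖) ∧
      ∃ u : Fin N → ℂ, (∀ j, ‖u j‖ = 1) ∧ w i = (b : ℂ) * ∑ j, u j :=
  hybrid_decomposition_general M N hN w b hb
end
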